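/- For every n ≥ 1, the number of André I permutations of [n] equals the number of André II permutations of [n]. -/

import Mathlib

open Finset

/-- The word `1, 2, …, n` as a list of integers. -/
def oneTo (n : ℕ) : List ℤ := (List.range n).map (fun i => (i : ℤ) + 1)

/-- `l` is (the word of) a permutation of `{1, …, n}`. -/
def IsPermWord (n : ℕ) (l : List ℤ) : Prop := l.Perm (oneTo n)

/-- The descent set of a word (1-based positions `i` with `l_i > l_{i+1}`). -/
def desSet (l : List ℤ) : Finset ℕ :=
  (Finset.Ico 1 l.length).filter (fun i => l.getD i 0 < l.getD (i - 1) 0)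

/-- Number of descents. -/
def desL (l : List ℤ) : ℕ := (desSet l).card

/-- Major index: sum of descent positions. -/
def majL (l : List ℤ) : ℕ := ∑ i ∈ desSet l, i

/-- The word of the inverse permutation of a permutation word of `{1,…,n}`. -/
def invWord (l : List ℤ) : List ℤ :=
  (List.range l.length).map (fun i => (l.idxOf ((i : ℤ) + 1) : ℤ) + 1)

/-- Number of inverse descents. -/
def idesL (l : List ℤ) : ℕ := desL (invWord l)

/-- Inverse major index. -/
def imajL (l : List ℤ) : ℕ := majL (invWord l)

/-- Number of inversions. -/
def invL (l : List ℤ) : ℕ :=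
  ((Finset.range l.length ×ˢ Finset.range l.length).filter
    (fun p => p.1 < p.2 ∧ l.getD p.2 0 < l.getD p.1 0)).card

/-- Number of right-to-left minima. -/
def rlminL (l : List ℤ) : ℕ :=
  ((Finset.range l.length).filter
    (fun i => ∀ j ∈ Finset.range l.length, i < j → l.getD i 0 < l.getD j 0)).card

/-- André I permutations (words of distinct integers):
`τ ++ m :: τ'` with `m` the minimum, both factors André I, and
the maximum of `τ ++ τ'` lying in `τ'` (vacuous for the empty factor word). -/
inductive AndreI : List ℤ → Prop
  | node (τ τ' : List ℤ) (m : ℤ) :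
      AndreI τ → AndreI τ' →
      (∀ x ∈ τ, m < x) → (∀ x ∈ τ', m < x) →
      (τ ++ τ' = [] ∨ ∃ M ∈ τ', ∀ x ∈ τ ++ τ', x ≤ M) →
      AndreI (τ ++ m :: τ')
  | nil : AndreI []

/-- André II permutations: as above but the minimum of `τ ++ τ'` lies in `τ'`. -/
inductive AndreII : List ℤ → Prop
  | node (τ τ' : List ℤ) (m : ℤ) :
      AndreII τ → AndreII τ' →
      (∀ x ∈ τ, m < x) → (∀ x ∈ τ', m < x) →
      (τ ++ τ' = [] ∨ ∃ c ∈ τ', ∀ x ∈ τ ++ τ', c ≤ x) →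
      AndreII (τ ++ m :: τ')
  | nil : AndreII []

/-- No double descents. -/
def NoDD (l : List ℤ) : Prop :=
  ∀ i, i + 2 < l.length →
    ¬ (l.getD (i + 1) 0 < l.getD i 0 ∧ l.getD (i + 2) 0 < l.getD (i + 1) 0)

/-- Simsun permutations of `{1,…,n}`: last letter `n`, and no double descents
after removing `n, n-1, …` in order (equivalently, every `{x ≤ k}`-restriction
has no double descents). -/
def Simsun (n : ℕ) (l : List ℤ) : Prop :=
  IsPermWord n l ∧ l.getLast? = some (n : ℤ) ∧
    ∀ k : ℕ, NoDD (l.filter (fun x => decide (x ≤ (k : ℤ))))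

/-- Order-isomorphic reduction of a word of distinct letters to `{1,…,len}`. -/
def reduce (l : List ℤ) : List ℤ :=
  l.map (fun x => ((l.filter (fun y => decide (y ≤ x))).length : ℤ))

/-- The set `σ ◊ τ` of permutations `μ = σ' 1 τ'` with `σ' ∼ σ`, `τ' ∼ τ`. -/
def diam (j k : ℕ) (σ τ : List ℤ) : Set (List ℤ) :=
  {μ | IsPermWord (j + k + 1) μ ∧ ∃ σ' τ' : List ℤ,
    μ = σ' ++ (1 : ℤ) :: τ' ∧ σ'.length = j ∧ τ'.length = k ∧
    reduce σ' = σ ∧ reduce τ' = τ}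

/-- The set `σ △ τ`: as `σ ◊ τ`, with the letter `j+k+1` in `τ'`. -/
def tria (j k : ℕ) (σ τ : List ℤ) : Set (List ℤ) :=
  {μ | IsPermWord (j + k + 1) μ ∧ ∃ σ' τ' : List ℤ,
    μ = σ' ++ (1 : ℤ) :: τ' ∧ σ'.length = j ∧ τ'.length = k ∧
    reduce σ' = σ ∧ reduce τ' = τ ∧ ((j : ℤ) + k + 1) ∈ τ'}

/-- The set `σ ▽ τ`: as `σ ◊ τ`, with the letter `2` in `τ'`. -/
def nab (j k : ℕ) (σ τ : List ℤ) : Set (List ℤ) :=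
  {μ | IsPermWord (j + k + 1) μ ∧ ∃ σ' τ' : List ℤ,
    μ = σ' ++ (1 : ℤ) :: τ' ∧ σ'.length = j ∧ τ'.length = k ∧
    reduce σ' = σ ∧ reduce τ' = τ ∧ (2 : ℤ) ∈ τ'}

/-- Binomial coefficient on integers, zero outside `0 ≤ b ≤ a`. -/
def C (a b : ℤ) : ℤ :=
  if 0 ≤ b ∧ b ≤ a then ((a.toNat).choose b.toNat : ℤ) else 0

/-- Gaussian binomial coefficient (as a polynomial in `q`). -/
noncomputable def qb : ℕ → ℕ → Polynomial ℤ
  | _, 0 => 1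
  | 0, _ + 1 => 0
  | a + 1, b + 1 => Polynomial.X ^ (b + 1) * qb a (b + 1) + qb a b

/-- Gaussian binomial coefficient on integer arguments, zero outside `0 ≤ b ≤ a`. -/
noncomputable def qbZ (a b : ℤ) : Polynomial ℤ :=
  if 0 ≤ b ∧ b ≤ a then qb a.toNat b.toNat else 0

/-- `IsShuffle l₁ l₂ l` : `l` is a shuffle of `l₁` and `l₂`. -/
inductive IsShuffle : List ℤ → List ℤ → List ℤ → Prop
  | nil : IsShuffle [] [] []
  | left (a : ℤ) {l₁ l₂ l : List ℤ} : IsShuffle l₁ l₂ l → IsShuffle (a :: l₁) l₂ (a :: l)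
  | right (a : ℤ) {l₁ l₂ l : List ℤ} : IsShuffle l₁ l₂ l → IsShuffle l₁ (a :: l₂) (a :: l)

/-- Unlabeled binary trees: a vertex may have an empty left and/or right subtree. -/
inductive BT where
  | leaf : BT
  | node : BT → BT → BT
deriving DecidableEq

/-- Number of vertices. -/
def BT.size : BT → ℕ
  | .leaf => 0
  | .node l r => l.size + r.size + 1

/-- No vertex has a left child but no right child. -/
def BT.url : BT → Prop
  | .leaf => True
  | .node l r => l.url ∧ r.url ∧ (l ≠ .leaf → r ≠ .leaf)

/-- Labeled binary trees with integer labels. -/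
inductive LTree where
  | leaf : LTree
  | node : LTree → ℤ → LTree → LTree

/-- The shape of a labeled tree. -/
def LTree.shape : LTree → BT
  | .leaf => .leaf
  | .node l _ r => .node l.shape r.shape

/-- The (increasing binary) tree of a word: root is the minimum letter,
left/right subtrees come from the factors before/after it (fuel version). -/
def treeAux : ℕ → List ℤ → LTree
  | 0, _ => .leaf
  | _ + 1, [] => .leaf
  | n + 1, l => 
      let m := (l.min?).getD 0
      let i := l.idxOf m
      .node (treeAux n (l.take i)) m (treeAux n (l.drop (i + 1)))

/-- The increasing binary tree `T_σ` of a word `σ`. -/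
def treeOf (l : List ℤ) : LTree := treeAux l.length l

/-- The shape of the increasing binary tree of a word. -/
def shapeOf (l : List ℤ) : BT := (treeOf l).shape

/-- Reading a labeled binary tree back into a word (inverse of `treeOf`). -/
def wordOfTree : LTree → List ℤ
  | .leaf => []
  | .node l a r => wordOfTree l ++ a :: wordOfTree r

/-- Relabel a labeled tree by a function on labels. -/
def LTree.relabel (f : ℤ → ℤ) : LTree → LTree
  | .leaf => .leaf
  | .node l a r => .node (l.relabel f) (f a) (r.relabel f)

/-- The labels of vertices not in any left subtree (root together with right spine). -/
def Rset : LTree → Finset ℤ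
  | .leaf => ∅
  | .node _ a r => insert a (Rset r)

/-- The relabeling determined by `R = {v₀ < v₁ < ⋯ < v_m}`: `v₀ ↦ 1`,
`v_i ↦ v_{i-1} + 1`, and `x ↦ x + 1` for `x ∉ R`. -/
def relabelFun (R : Finset ℤ) (x : ℤ) : ℤ :=
  if x ∈ R then (WithBot.unbotD 0 (R.filter (fun y => y < x)).max) + 1 else x + 1

/-- The bijection `Ω` from simsun permutations to André II permutations,
realized on words via relabeling of the increasing binary tree. -/
def OmegaWord (σ : List ℤ) : List ℤ :=
  wordOfTree ((treeOf σ).relabel (relabelFun (Rset (treeOf σ))))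
section Aux

lemma oneTo_eq (n : ℕ) : oneTo n = (List.range n).map (fun i : ℕ => (i : ℤ) + 1) := by
  simp only [oneTo, List.bind_eq_flatMap, List.pure_def]
  rw [show (fun a : ℕ => [(↑a : ℤ)]) = pure ∘ (fun a : ℕ => (a : ℤ)) from rfl,
    List.flatMap_pure_eq_map, List.map_map]
  rfl

lemma mem_oneTo {n : ℕ} {x : ℤ} : x ∈ oneTo n ↔ 1 ≤ x ∧ x ≤ n := by
  rw [oneTo_eq]
  simp only [List.mem_map, List.mem_range]
  constructor
  · rintro ⟨i, hi, rfl⟩; omega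
  · rintro ⟨h1, h2⟩; exact ⟨(x - 1).toNat, by omega, by omega⟩

lemma oneTo_length (n : ℕ) : (oneTo n).length = n := by
  rw [oneTo_eq, List.length_map, List.length_range]

lemma oneTo_nodup (n : ℕ) : (oneTo n).Nodup := by
  rw [oneTo_eq]
  refine List.Nodup.map ?_ List.nodup_range
  intro a b h
  simp only at h; omega

lemma isPermWord_iff {n : ℕ} {l : List ℤ} :
    IsPermWord n l ↔ l.Nodup ∧ ∀ x, x ∈ l ↔ 1 ≤ x ∧ x ≤ n := by
  constructor
  · intro h
    exact ⟨h.nodup_iff.mpr (oneTo_nodup n), fun x => h.mem_iff.trans mem_oneTo⟩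
  · rintro ⟨h1, h2⟩
    exact (List.perm_ext_iff_of_nodup h1 (oneTo_nodup n)).mpr
      (fun a => (h2 a).trans mem_oneTo.symm)

lemma isPermWord_length {n : ℕ} {l : List ℤ} (h : IsPermWord n l) : l.length = n :=
  h.length_eq.trans (oneTo_length n)

/-- rank function -/
def rk (l : List ℤ) (x : ℤ) : ℤ := ((l.filter (fun y => decide (y ≤ x))).length : ℤ)

lemma reduce_eq_map (l : List ℤ) : reduce l = l.map (rk l) := rfl

def embL (S : Finset ℤ) (α : List ℤ) : List ℤ :=
  α.map (fun x => (S.sort (·≤·)).getD (x.toNat - 1) 0)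

lemma sorted_filter_le_length (L : List ℤ) (h : L.Pairwise (·<·)) :
    ∀ (i : ℕ) (hi : i < L.length),
      (L.filter (fun y => decide (y ≤ L.get ⟨i, hi⟩))).length = i + 1 := by
  induction L with
  | nil => intro i hi; simp at hi
  | cons a L ih =>
    intro i hi
    have ha : ∀ y ∈ L, a < y := fun y hy => (List.pairwise_cons.mp h).1 y hy
    cases i with
    | zero =>
      show ((a :: L).filter (fun y => decide (y ≤ a))).length = 1
      rw [List.filter_cons]
      have h0 : L.filter (fun y => decide (y ≤ a)) = [] := by
        apply List.filter_eq_nil_iff.mpr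
        intro y hy
        simpa using not_le.mpr (ha y hy)
      simp [h0]
    | succ i' =>
      have hi' : i' < L.length := by simpa using hi
      have hget : (a :: L).get ⟨i' + 1, hi⟩ = L.get ⟨i', hi'⟩ := rfl
      rw [hget, List.filter_cons]
      have haa : a ≤ L.get ⟨i', hi'⟩ := le_of_lt (ha _ (L.get_mem _))
      rw [if_pos (by simpa using haa), List.length_cons,
        ih (List.pairwise_cons.mp h).2 i' hi']

end Aux

section Emb

lemma rk_lt {τ : List ℤ} {x y : ℤ} (hy : y ∈ τ) (hxy : x < y) : rk τ x < rk τ y := by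
  unfold rk
  have h1 : τ.filter (fun z => decide (z ≤ x))
      = (τ.filter (fun z => decide (z ≤ y))).filter (fun z => decide (z ≤ x)) := by
    rw [List.filter_filter]
    apply List.filter_congr
    intro z _
    by_cases hzx : z ≤ x
    · simp [hzx, le_trans hzx (le_of_lt hxy)]
    · simp [hzx]
  rw [h1]
  have h2 : ((τ.filter (fun z => decide (z ≤ y))).filter (fun z => decide (z ≤ x))).length
      < (τ.filter (fun z => decide (z ≤ y))).length := by
    apply List.length_filter_lt_length_iff_exists.mpr
    exact ⟨y, List.mem_filter.mpr ⟨hy, by simp⟩, by simp [not_le.mpr hxy]⟩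
  exact_mod_cast h2

lemma rk_pos {τ : List ℤ} {x : ℤ} (hx : x ∈ τ) : 1 ≤ rk τ x := by
  unfold rk
  have : x ∈ τ.filter (fun z => decide (z ≤ x)) := List.mem_filter.mpr ⟨hx, by simp⟩
  have := List.length_pos_of_mem this
  omega

lemma rk_le {τ : List ℤ} (x : ℤ) : rk τ x ≤ τ.length := by
  unfold rk
  have := List.length_filter_le (fun z => decide (z ≤ x)) τ
  omega

lemma rk_getD_sort {τ : List ℤ} (hnd : τ.Nodup) {x : ℤ} (hx : x ∈ τ) :
    (τ.toFinset.sort (·≤·)).getD ((rk τ x).toNat - 1) 0 = x := by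
  set L := τ.toFinset.sort (·≤·) with hL
  have hndL : L.Nodup := τ.toFinset.sort_nodup _
  have hperm : τ.Perm L :=
    (List.perm_ext_iff_of_nodup hnd hndL).mpr (by intro a; simp [hL, Finset.mem_sort])
  obtain ⟨i, hi⟩ := List.mem_iff_get.mp (hperm.mem_iff.mp hx)
  have hsorted : L.Pairwise (·<·) := τ.toFinset.sortedLT_sort.pairwise
  have hrk : rk τ x = rk L x := by
    unfold rk; rw [(hperm.filter _).length_eq]
  have hcount : rk L x = (i : ℕ) + 1 := by
    unfold rk
    rw [← hi]
    have h5 := sorted_filter_le_length L hsorted i.1 i.isLt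
    simp only [Fin.eta] at h5
    exact_mod_cast h5
  rw [hrk, hcount]
  have : (((i : ℕ) + 1 : ℤ)).toNat - 1 = (i : ℕ) := by omega
  rw [this, List.getD_eq_getElem _ _ i.isLt]
  exact hi

/-- L8 -/
lemma embL_reduce {τ : List ℤ} (hnd : τ.Nodup) : embL τ.toFinset (reduce τ) = τ := by
  rw [reduce_eq_map, embL, List.map_map]
  have : ∀ x ∈ τ, ((fun x => (τ.toFinset.sort (·≤·)).getD (x.toNat - 1) 0) ∘ rk τ) x = id x :=
    fun x hx => rk_getD_sort hnd hx
  rw [List.map_congr_left this, List.map_id]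

lemma sort_get_mono (S : Finset ℤ) {i j : ℕ} (hij : i < j) (hj : j < (S.sort (·≤·)).length) :
    (S.sort (·≤·)).get ⟨i, lt_trans hij hj⟩ < (S.sort (·≤·)).get ⟨j, hj⟩ :=
  (S.sortedLT_sort).strictMono_get (show (⟨i, _⟩ : Fin _) < ⟨j, hj⟩ from hij)

lemma embL_fun_lt {S : Finset ℤ} {x y : ℤ} (h1 : 1 ≤ x) (hxy : x < y) (h2 : y ≤ S.card) :
    (S.sort (·≤·)).getD (x.toNat - 1) 0 < (S.sort (·≤·)).getD (y.toNat - 1) 0 := by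
  have hlen : (S.sort (·≤·)).length = S.card := S.length_sort _
  have hx' : x.toNat - 1 < (S.sort (·≤·)).length := by omega
  have hy' : y.toNat - 1 < (S.sort (·≤·)).length := by omega
  rw [List.getD_eq_getElem _ _ hx', List.getD_eq_getElem _ _ hy']
  exact (S.sortedLT_sort).strictMono_get (show (⟨x.toNat-1,hx'⟩ : Fin _) < ⟨y.toNat-1,hy'⟩ from by
    simp only [Fin.mk_lt_mk]; omega)

lemma map_oneTo_eq_sort (S : Finset ℤ) :
    (oneTo S.card).map (fun x => (S.sort (·≤·)).getD (x.toNat - 1) 0) = S.sort (·≤·) := by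
  apply List.ext_getElem
  · rw [List.length_map, oneTo_length]
    exact (S.length_sort (fun x1 x2 => x1 ≤ x2)).symm
  · intro i h1 h2
    rw [List.getElem_map]
    have hlen : i < (oneTo S.card).length := by
      rw [List.length_map] at h1; exact h1
    have hget : (oneTo S.card)[i] = (i : ℤ) + 1 := by
      simp [oneTo_eq]
    rw [hget]
    have h3 : (((i : ℤ) + 1)).toNat - 1 = i := by omega
    rw [h3, List.getD_eq_getElem _ _ h2]

lemma embL_perm {S : Finset ℤ} {α : List ℤ} (h : IsPermWord S.card α) :
    (embL S α).Perm (S.sort (·≤·)) := by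
  have := h.map (fun x => (S.sort (·≤·)).getD (x.toNat - 1) 0)
  rw [map_oneTo_eq_sort] at this
  exact this

lemma mem_embL {S : Finset ℤ} {α : List ℤ} (h : IsPermWord S.card α) {x : ℤ} :
    x ∈ embL S α ↔ x ∈ S := by
  rw [(embL_perm h).mem_iff, Finset.mem_sort]

lemma embL_nodup {S : Finset ℤ} {α : List ℤ} (h : IsPermWord S.card α) :
    (embL S α).Nodup := (embL_perm h).nodup_iff.mpr (S.sort_nodup _)

lemma embL_toFinset {S : Finset ℤ} {α : List ℤ} (h : IsPermWord S.card α) :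
    (embL S α).toFinset = S := by
  ext x; rw [List.mem_toFinset, mem_embL h]

lemma embL_length {S : Finset ℤ} (α : List ℤ) : (embL S α).length = α.length :=
  List.length_map _

/-- injectivity helper -/
lemma map_inj_on {f : ℤ → ℤ} {P : ℤ → Prop}
    (hinj : ∀ x y, P x → P y → f x = f y → x = y) :
    ∀ {l l' : List ℤ}, (∀ x ∈ l, P x) → (∀ x ∈ l', P x) → l.map f = l'.map f → l = l' := by
  intro l
  induction l with
  | nil => intro l' _ _ h; cases l' with
    | nil => rfl
    | cons b t => simp at h
  | cons a t ih =>
    intro l' hl hl' h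
    cases l' with
    | nil => simp at h
    | cons b t' =>
      simp only [List.map_cons, List.cons.injEq] at h
      have hab : a = b := hinj a b (hl a (by simp)) (hl' b (by simp)) h.1
      rw [hab, ih (fun x hx => hl x (by simp [hx])) (fun x hx => hl' x (by simp [hx])) h.2]

lemma reduce_permWord {τ : List ℤ} (hnd : τ.Nodup) : IsPermWord τ.length (reduce τ) := by
  rw [isPermWord_iff]
  have hndr : (reduce τ).Nodup := by
    rw [reduce_eq_map]
    apply List.Nodup.map_on ?_ hnd
    intro x hx y hy hxy
    by_contra hne
    rcases lt_or_gt_of_ne hne with h | h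
    · exact absurd hxy (ne_of_lt (rk_lt hy h))
    · exact absurd hxy.symm (ne_of_lt (rk_lt hx h))
  refine ⟨hndr, fun x => ?_⟩
  have hsub : (reduce τ).toFinset ⊆ Finset.Icc 1 (τ.length : ℤ) := by
    intro x hx
    rw [List.mem_toFinset, reduce_eq_map, List.mem_map] at hx
    obtain ⟨t, ht, rfl⟩ := hx
    rw [Finset.mem_Icc]
    exact ⟨rk_pos ht, rk_le t⟩
  have hlen : (reduce τ).length = τ.length := by rw [reduce_eq_map, List.length_map]
  have hcard : (reduce τ).toFinset.card = τ.length := by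
    rw [List.toFinset_card_of_nodup hndr, hlen]
  have hIcc : (Finset.Icc (1:ℤ) (τ.length : ℤ)).card = τ.length := by
    rw [Int.card_Icc]; omega
  have heq : (reduce τ).toFinset = Finset.Icc 1 (τ.length : ℤ) :=
    Finset.eq_of_subset_of_card_le hsub (by omega)
  rw [← List.mem_toFinset, heq, Finset.mem_Icc]

/-- L7 -/
lemma reduce_embL {S : Finset ℤ} {α : List ℤ} (h : IsPermWord S.card α) :
    reduce (embL S α) = α := by
  have hnd := embL_nodup h
  have h8 := embL_reduce hnd
  rw [embL_toFinset h] at h8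
  have hlen : (embL S α).length = S.card := by
    rw [embL_length, isPermWord_length h]
  have hred : IsPermWord S.card (reduce (embL S α)) := by
    have := reduce_permWord hnd
    rwa [hlen] at this
  have hmem1 : ∀ x ∈ reduce (embL S α), 1 ≤ x ∧ x ≤ (S.card : ℤ) :=
    fun x hx => (isPermWord_iff.mp hred).2 x |>.mp hx
  have hmem2 : ∀ x ∈ α, 1 ≤ x ∧ x ≤ (S.card : ℤ) :=
    fun x hx => (isPermWord_iff.mp h).2 x |>.mp hx
  refine map_inj_on (P := fun x => 1 ≤ x ∧ x ≤ (S.card : ℤ)) ?_ hmem1 hmem2 h8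
  intro x y hx hy hxy
  by_contra hne
  rcases lt_or_gt_of_ne hne with hlt | hlt
  · exact absurd hxy (ne_of_lt (embL_fun_lt hx.1 hlt hy.2))
  · exact absurd hxy.symm (ne_of_lt (embL_fun_lt hy.1 hlt hx.2))

end Emb

section AndreLemmas

lemma andreI_map : ∀ {l : List ℤ}, AndreI l →
    ∀ f : ℤ → ℤ, (∀ x ∈ l, ∀ y ∈ l, x < y → f x < f y) → AndreI (l.map f) := by
  intro l h
  induction h with
  | nil => intro f _; exact AndreI.nil
  | node τ τ' m h1 h2 hm1 hm2 hmax ih1 ih2 =>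
    intro f hf
    have mτ : ∀ x ∈ τ, x ∈ τ ++ m :: τ' := fun x hx => List.mem_append.mpr (Or.inl hx)
    have mτ' : ∀ x ∈ τ', x ∈ τ ++ m :: τ' :=
      fun x hx => List.mem_append.mpr (Or.inr (List.mem_cons_of_mem _ hx))
    have mm : m ∈ τ ++ m :: τ' := List.mem_append.mpr (Or.inr (List.mem_cons_self))
    rw [List.map_append, List.map_cons]
    refine AndreI.node _ _ _
      (ih1 f (fun x hx y hy => hf x (mτ x hx) y (mτ y hy)))
      (ih2 f (fun x hx y hy => hf x (mτ' x hx) y (mτ' y hy))) ?_ ?_ ?_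
    · intro x hx
      obtain ⟨t, ht, rfl⟩ := List.mem_map.mp hx
      exact hf m mm t (mτ t ht) (hm1 t ht)
    · intro x hx
      obtain ⟨t, ht, rfl⟩ := List.mem_map.mp hx
      exact hf m mm t (mτ' t ht) (hm2 t ht)
    · rcases hmax with h0 | ⟨M, hM, hMx⟩
      · left
        obtain ⟨e1, e2⟩ := List.append_eq_nil_iff.mp h0
        rw [e1, e2]; rfl
      · right
        refine ⟨f M, List.mem_map_of_mem hM, ?_⟩
        intro x hx
        rw [← List.map_append] at hx
        obtain ⟨t, ht, rfl⟩ := List.mem_map.mp hx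
        have htb : t ∈ τ ++ m :: τ' := by
          rcases List.mem_append.mp ht with h' | h'
          · exact mτ t h'
          · exact mτ' t h'
        rcases eq_or_lt_of_le (hMx t ht) with he | hlt
        · rw [he]
        · exact le_of_lt (hf t htb M (mτ' M hM) hlt)

lemma andreII_map : ∀ {l : List ℤ}, AndreII l →
    ∀ f : ℤ → ℤ, (∀ x ∈ l, ∀ y ∈ l, x < y → f x < f y) → AndreII (l.map f) := by
  intro l h
  induction h with
  | nil => intro f _; exact AndreII.nil
  | node τ τ' m h1 h2 hm1 hm2 hmin ih1 ih2 =>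
    intro f hf
    have mτ : ∀ x ∈ τ, x ∈ τ ++ m :: τ' := fun x hx => List.mem_append.mpr (Or.inl hx)
    have mτ' : ∀ x ∈ τ', x ∈ τ ++ m :: τ' :=
      fun x hx => List.mem_append.mpr (Or.inr (List.mem_cons_of_mem _ hx))
    have mm : m ∈ τ ++ m :: τ' := List.mem_append.mpr (Or.inr (List.mem_cons_self))
    rw [List.map_append, List.map_cons]
    refine AndreII.node _ _ _
      (ih1 f (fun x hx y hy => hf x (mτ x hx) y (mτ y hy)))
      (ih2 f (fun x hx y hy => hf x (mτ' x hx) y (mτ' y hy))) ?_ ?_ ?_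
    · intro x hx
      obtain ⟨t, ht, rfl⟩ := List.mem_map.mp hx
      exact hf m mm t (mτ t ht) (hm1 t ht)
    · intro x hx
      obtain ⟨t, ht, rfl⟩ := List.mem_map.mp hx
      exact hf m mm t (mτ' t ht) (hm2 t ht)
    · rcases hmin with h0 | ⟨c, hc, hcx⟩
      · left
        obtain ⟨e1, e2⟩ := List.append_eq_nil_iff.mp h0
        rw [e1, e2]; rfl
      · right
        refine ⟨f c, List.mem_map_of_mem hc, ?_⟩
        intro x hx
        rw [← List.map_append] at hx
        obtain ⟨t, ht, rfl⟩ := List.mem_map.mp hx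
        have htb : t ∈ τ ++ m :: τ' := by
          rcases List.mem_append.mp ht with h' | h'
          · exact mτ t h'
          · exact mτ' t h'
        rcases eq_or_lt_of_le (hcx t ht) with he | hlt
        · rw [← he]
        · exact le_of_lt (hf c (mτ' c hc) t htb hlt)

lemma split_eq {a : ℤ} : ∀ {s₁ s₂ t₁ t₂ : List ℤ}, s₁ ++ a :: t₁ = s₂ ++ a :: t₂ →
    a ∉ s₁ → a ∉ s₂ → s₁ = s₂ ∧ t₁ = t₂ := by
  intro s₁
  induction s₁ with
  | nil =>
    intro s₂ t₁ t₂ h h1 h2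
    cases s₂ with
    | nil => simpa using h
    | cons b s₂ =>
      exfalso
      simp only [List.nil_append, List.cons_append, List.cons.injEq] at h
      exact h2 (h.1 ▸ List.mem_cons_self (a := b) (l := s₂))
  | cons b s₁ ih =>
    intro s₂ t₁ t₂ h h1 h2
    cases s₂ with
    | nil =>
      exfalso
      simp only [List.nil_append, List.cons_append, List.cons.injEq] at h
      exact h1 (h.1 ▸ List.mem_cons_self (a := b) (l := s₁))
    | cons c s₂ =>
      simp only [List.cons_append, List.cons.injEq] at h
      obtain ⟨rfl, h'⟩ := h
      obtain ⟨e1, e2⟩ := ih h' (fun hm => h1 (List.mem_cons_of_mem _ hm))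
        (fun hm => h2 (List.mem_cons_of_mem _ hm))
      exact ⟨by rw [e1], e2⟩

lemma andreI_inv {l : List ℤ} (h : AndreI l) :
    l = [] ∨ ∃ τ τ' m, l = τ ++ m :: τ' ∧ AndreI τ ∧ AndreI τ' ∧
      (∀ x ∈ τ, m < x) ∧ (∀ x ∈ τ', m < x) ∧
      (τ ++ τ' = [] ∨ ∃ M ∈ τ', ∀ x ∈ τ ++ τ', x ≤ M) := by
  cases h with
  | nil => exact Or.inl rfl
  | node τ τ' m h1 h2 hm1 hm2 hmax => exact Or.inr ⟨τ, τ', m, rfl, h1, h2, hm1, hm2, hmax⟩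

lemma andreII_inv {l : List ℤ} (h : AndreII l) :
    l = [] ∨ ∃ τ τ' m, l = τ ++ m :: τ' ∧ AndreII τ ∧ AndreII τ' ∧
      (∀ x ∈ τ, m < x) ∧ (∀ x ∈ τ', m < x) ∧
      (τ ++ τ' = [] ∨ ∃ c ∈ τ', ∀ x ∈ τ ++ τ', c ≤ x) := by
  cases h with
  | nil => exact Or.inl rfl
  | node τ τ' m h1 h2 hm1 hm2 hmin => exact Or.inr ⟨τ, τ', m, rfl, h1, h2, hm1, hm2, hmin⟩

end AndreLemmas

section Split

variable {n : ℕ} {τ τ' : List ℤ}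

lemma split_facts (hp : IsPermWord n (τ ++ 1 :: τ')) :
    (1:ℤ) ∉ τ ∧ (1:ℤ) ∉ τ' ∧ (∀ x ∈ τ, (2:ℤ) ≤ x ∧ x ≤ n) ∧
      (∀ x ∈ τ', (2:ℤ) ≤ x ∧ x ≤ n) ∧ τ.Disjoint τ' := by
  obtain ⟨hnd, hmem⟩ := isPermWord_iff.mp hp
  obtain ⟨ndτ, nd2, hdisj⟩ := List.nodup_append.mp hnd
  have h1τ' : (1:ℤ) ∉ τ' := (List.nodup_cons.mp nd2).1
  have h1τ : (1:ℤ) ∉ τ := fun hm => hdisj 1 hm 1 List.mem_cons_self rfl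
  have hxτ : ∀ x ∈ τ, (2:ℤ) ≤ x ∧ x ≤ n := by
    intro x hx
    have := (hmem x).mp (List.mem_append.mpr (Or.inl hx))
    have hne : x ≠ 1 := fun he => h1τ (he ▸ hx)
    omega
  have hxτ' : ∀ x ∈ τ', (2:ℤ) ≤ x ∧ x ≤ n := by
    intro x hx
    have := (hmem x).mp (List.mem_append.mpr (Or.inr (List.mem_cons_of_mem _ hx)))
    have hne : x ≠ 1 := fun he => h1τ' (he ▸ hx)
    omega
  exact ⟨h1τ, h1τ', hxτ, hxτ', fun {a} ha ha' => hdisj a ha a (List.mem_cons_of_mem _ ha') rfl⟩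

lemma andreI_split_iff (hn : 2 ≤ n) (hp : IsPermWord n (τ ++ 1 :: τ')) :
    AndreI (τ ++ 1 :: τ') ↔ AndreI τ ∧ AndreI τ' ∧ (n : ℤ) ∈ τ' := by
  obtain ⟨h1τ, h1τ', hxτ, hxτ', _⟩ := split_facts hp
  obtain ⟨hnd, hmem⟩ := isPermWord_iff.mp hp
  have hlen : τ.length + 1 + τ'.length = n := by
    have := isPermWord_length hp
    simp only [List.length_append, List.length_cons] at this
    omega
  constructor
  · intro h
    rcases andreI_inv h with h0 | ⟨σ, σ', m, he, a1, a2, am1, am2, amax⟩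
    · exact absurd h0 (by simp)
    have hm1 : m = 1 := by
      have hmmem : m ∈ τ ++ 1 :: τ' := he ▸ List.mem_append.mpr
        (Or.inr (List.mem_cons_self))
      have hm_ge : (1:ℤ) ≤ m := ((hmem m).mp hmmem).1
      have h1mem : (1:ℤ) ∈ σ ++ m :: σ' := he ▸ (hmem 1).mpr (by constructor <;> omega)
      rcases List.mem_append.mp h1mem with h' | h'
      · exact absurd hm_ge (not_le.mpr (am1 1 h'))
      · rcases List.mem_cons.mp h' with h'' | h''
        · omega
        · exact absurd hm_ge (not_le.mpr (am2 1 h''))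
    subst hm1
    have h1σ : (1:ℤ) ∉ σ := fun hm => lt_irrefl 1 (am1 1 hm)
    obtain ⟨e1, e2⟩ := split_eq he h1τ h1σ
    subst e1; subst e2
    refine ⟨a1, a2, ?_⟩
    rcases amax with h0 | ⟨M, hM, hMx⟩
    · exfalso
      have := congrArg List.length h0
      simp only [List.length_append, List.length_nil] at this
      omega
    · have hnmem : (n:ℤ) ∈ τ ++ 1 :: τ' := (hmem n).mpr (by constructor <;> omega)
      have hn1 : (n:ℤ) ≠ 1 := by omega
      have hnττ' : (n:ℤ) ∈ τ ++ τ' := by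
        rcases List.mem_append.mp hnmem with h' | h'
        · exact List.mem_append.mpr (Or.inl h')
        · rcases List.mem_cons.mp h' with h'' | h''
          · exact absurd h'' hn1
          · exact List.mem_append.mpr (Or.inr h'')
      have hMn : M = n := by
        have h1 := hMx _ hnττ'
        have h2 := (hxτ' M hM).2
        omega
      exact hMn ▸ hM
  · rintro ⟨h1, h2, h3⟩
    refine AndreI.node τ τ' 1 h1 h2 (fun x hx => by have := (hxτ x hx).1; omega)
      (fun x hx => by have := (hxτ' x hx).1; omega) (Or.inr ⟨n, h3, ?_⟩)
    intro x hx
    rcases List.mem_append.mp hx with h' | h'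
    · exact (hxτ x h').2
    · exact (hxτ' x h').2

lemma andreII_split_iff (hn : 2 ≤ n) (hp : IsPermWord n (τ ++ 1 :: τ')) :
    AndreII (τ ++ 1 :: τ') ↔ AndreII τ ∧ AndreII τ' ∧ (2 : ℤ) ∈ τ' := by
  obtain ⟨h1τ, h1τ', hxτ, hxτ', _⟩ := split_facts hp
  obtain ⟨hnd, hmem⟩ := isPermWord_iff.mp hp
  have hlen : τ.length + 1 + τ'.length = n := by
    have := isPermWord_length hp
    simp only [List.length_append, List.length_cons] at this
    omega
  constructor
  · intro h
    rcases andreII_inv h with h0 | ⟨σ, σ', m, he, a1, a2, am1, am2, amin⟩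
    · exact absurd h0 (by simp)
    have hm1 : m = 1 := by
      have hmmem : m ∈ τ ++ 1 :: τ' := he ▸ List.mem_append.mpr
        (Or.inr (List.mem_cons_self))
      have hm_ge : (1:ℤ) ≤ m := ((hmem m).mp hmmem).1
      have h1mem : (1:ℤ) ∈ σ ++ m :: σ' := he ▸ (hmem 1).mpr (by constructor <;> omega)
      rcases List.mem_append.mp h1mem with h' | h'
      · exact absurd hm_ge (not_le.mpr (am1 1 h'))
      · rcases List.mem_cons.mp h' with h'' | h''
        · omega
        · exact absurd hm_ge (not_le.mpr (am2 1 h''))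
    subst hm1
    have h1σ : (1:ℤ) ∉ σ := fun hm => lt_irrefl 1 (am1 1 hm)
    obtain ⟨e1, e2⟩ := split_eq he h1τ h1σ
    subst e1; subst e2
    refine ⟨a1, a2, ?_⟩
    rcases amin with h0 | ⟨c, hc, hcx⟩
    · exfalso
      have := congrArg List.length h0
      simp only [List.length_append, List.length_nil] at this
      omega
    · have h2mem : (2:ℤ) ∈ τ ++ 1 :: τ' := (hmem 2).mpr (by constructor <;> omega)
      have h2ττ' : (2:ℤ) ∈ τ ++ τ' := by
        rcases List.mem_append.mp h2mem with h' | h'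
        · exact List.mem_append.mpr (Or.inl h')
        · rcases List.mem_cons.mp h' with h'' | h''
          · exact absurd h'' (by norm_num)
          · exact List.mem_append.mpr (Or.inr h'')
      have hc2 : c = 2 := by
        have h1 := hcx _ h2ττ'
        have h2 := (hxτ' c hc).1
        omega
      exact hc2 ▸ hc
  · rintro ⟨h1, h2, h3⟩
    refine AndreII.node τ τ' 1 h1 h2 (fun x hx => by have := (hxτ x hx).1; omega)
      (fun x hx => by have := (hxτ' x hx).1; omega) (Or.inr ⟨2, h3, ?_⟩)
    intro x hx
    rcases List.mem_append.mp hx with h' | h'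
    · exact (hxτ x h').1
    · exact (hxτ' x h').1

end Split

section Count

open scoped Classical

noncomputable def AF (n : ℕ) : Finset (List ℤ) :=
  ((oneTo n).permutations.toFinset).filter (fun l => AndreI l)

noncomputable def BF (n : ℕ) : Finset (List ℤ) :=
  ((oneTo n).permutations.toFinset).filter (fun l => AndreII l)

lemma mem_AF {n : ℕ} {l : List ℤ} : l ∈ AF n ↔ IsPermWord n l ∧ AndreI l := by
  rw [AF, Finset.mem_filter, List.mem_toFinset, List.mem_permutations]
  rfl

lemma mem_BF {n : ℕ} {l : List ℤ} : l ∈ BF n ↔ IsPermWord n l ∧ AndreII l := by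
  rw [BF, Finset.mem_filter, List.mem_toFinset, List.mem_permutations]
  rfl

noncomputable def IA (n : ℕ) : Finset (Finset ℤ) :=
  (Finset.Icc (2:ℤ) n).powerset.filter (fun S => (n:ℤ) ∉ S)

noncomputable def IB (n : ℕ) : Finset (Finset ℤ) :=
  (Finset.Icc (2:ℤ) n).powerset.filter (fun S => (2:ℤ) ∉ S)

lemma card_Icc2n (n : ℕ) (hn : 1 ≤ n) : (Finset.Icc (2:ℤ) n).card = n - 1 := by
  rw [Int.card_Icc]; omega

lemma card_T {n : ℕ} {S : Finset ℤ} (hn : 1 ≤ n) (hS : S ⊆ Finset.Icc (2:ℤ) n) :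
    (Finset.Icc (2:ℤ) n \ S).card = n - 1 - S.card := by
  rw [Finset.card_sdiff_of_subset hS, card_Icc2n n hn]

lemma construct_isPermWord {n : ℕ} {S : Finset ℤ} {α β : List ℤ} (hn : 1 ≤ n)
    (hS : S ⊆ Finset.Icc (2:ℤ) n) (hα : IsPermWord S.card α)
    (hβ : IsPermWord (Finset.Icc (2:ℤ) n \ S).card β) :
    IsPermWord n (embL S α ++ 1 :: embL (Finset.Icc (2:ℤ) n \ S) β) := by
  set T := Finset.Icc (2:ℤ) n \ S with hT
  have hmemS : ∀ x ∈ S, (2:ℤ) ≤ x ∧ x ≤ n := by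
    intro x hx; have := hS hx; rw [Finset.mem_Icc] at this; exact this
  have hmemT : ∀ x ∈ T, ((2:ℤ) ≤ x ∧ x ≤ n) ∧ x ∉ S := by
    intro x hx; rw [hT, Finset.mem_sdiff, Finset.mem_Icc] at hx; exact hx
  rw [isPermWord_iff]
  constructor
  · rw [List.nodup_append]
    refine ⟨embL_nodup hα, List.nodup_cons.mpr ⟨?_, embL_nodup hβ⟩, ?_⟩
    · intro hmem
      have := (hmemT 1 ((mem_embL hβ).mp hmem)).1
      omega
    · intro a ha b ha' hab
      have haS := (mem_embL hα).mp ha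
      rcases List.mem_cons.mp ha' with h' | h'
      · have := (hmemS a haS).1; omega
      · exact (hmemT b ((mem_embL hβ).mp h')).2 (hab ▸ haS)
  · intro x
    constructor
    · intro hx
      rcases List.mem_append.mp hx with h' | h'
      · have := hmemS x ((mem_embL hα).mp h'); omega
      · rcases List.mem_cons.mp h' with h'' | h''
        · omega
        · have := (hmemT x ((mem_embL hβ).mp h'')).1; omega
    · rintro ⟨h1, h2⟩
      by_cases hx1 : x = 1
      · exact List.mem_append.mpr (Or.inr (hx1 ▸ List.mem_cons_self))
      · by_cases hxS : x ∈ S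
        · exact List.mem_append.mpr (Or.inl ((mem_embL hα).mpr hxS))
        · have hxT : x ∈ T := by
            rw [hT, Finset.mem_sdiff, Finset.mem_Icc]
            exact ⟨⟨by omega, h2⟩, hxS⟩
          exact List.mem_append.mpr (Or.inr (List.mem_cons_of_mem _
            ((mem_embL hβ).mpr hxT)))

lemma one_not_mem_embL {n : ℕ} {S : Finset ℤ} {α : List ℤ}
    (hS : S ⊆ Finset.Icc (2:ℤ) n) (hα : IsPermWord S.card α) : (1:ℤ) ∉ embL S α := by
  intro hmem
  have := hS ((mem_embL hα).mp hmem)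
  rw [Finset.mem_Icc] at this
  omega

lemma cardAF (n : ℕ) (hn : 2 ≤ n) :
    (AF n).card = ∑ S ∈ IA n, (AF S.card).card * (AF (n - 1 - S.card)).card := by
  have key : ((IA n).sigma (fun S => AF S.card ×ˢ AF (n - 1 - S.card))).card = (AF n).card := by
    apply Finset.card_bij
      (fun p _ => embL p.1 p.2.1 ++ 1 :: embL (Finset.Icc (2:ℤ) n \ p.1) p.2.2)
    · -- maps into AF n
      rintro ⟨S, α, β⟩ hp
      simp only [Finset.mem_sigma, Finset.mem_product, IA, Finset.mem_filter,
        Finset.mem_powerset] at hp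
      obtain ⟨⟨hS, hnS⟩, hαm, hβm⟩ := hp
      obtain ⟨hα, hαA⟩ := mem_AF.mp hαm
      obtain ⟨hβ, hβA⟩ := mem_AF.mp hβm
      have hTcard : (Finset.Icc (2:ℤ) n \ S).card = n - 1 - S.card := card_T (by omega) hS
      have hβ' : IsPermWord (Finset.Icc (2:ℤ) n \ S).card β := by rw [hTcard]; exact hβ
      have hperm := construct_isPermWord (by omega) hS hα hβ'
      rw [mem_AF]
      refine ⟨hperm, (andreI_split_iff hn hperm).mpr ⟨?_, ?_, ?_⟩⟩
      · exact andreI_map hαA _ (fun x hx y hy hxy => embL_fun_lt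
          ((isPermWord_iff.mp hα).2 x |>.mp hx).1 hxy ((isPermWord_iff.mp hα).2 y |>.mp hy).2)
      · exact andreI_map hβA _ (fun x hx y hy hxy => embL_fun_lt
          ((isPermWord_iff.mp hβ').2 x |>.mp hx).1 hxy ((isPermWord_iff.mp hβ').2 y |>.mp hy).2)
      · refine (mem_embL hβ').mpr ?_
        rw [Finset.mem_sdiff, Finset.mem_Icc]
        exact ⟨⟨by omega, by omega⟩, hnS⟩
    · -- injective
      rintro ⟨S, α, β⟩ hp ⟨S', α', β'⟩ hp' heq
      simp only [Finset.mem_sigma, Finset.mem_product, IA, Finset.mem_filter,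
        Finset.mem_powerset] at hp hp'
      dsimp only at heq
      obtain ⟨⟨hS, _⟩, hαm, hβm⟩ := hp
      obtain ⟨⟨hS', _⟩, hαm', hβm'⟩ := hp'
      obtain ⟨hα, _⟩ := mem_AF.mp hαm
      obtain ⟨hβ, _⟩ := mem_AF.mp hβm
      obtain ⟨hα', _⟩ := mem_AF.mp hαm'
      obtain ⟨hβ', _⟩ := mem_AF.mp hβm'
      have hTc : (Finset.Icc (2:ℤ) n \ S).card = n - 1 - S.card := card_T (by omega) hS
      have hTc' : (Finset.Icc (2:ℤ) n \ S').card = n - 1 - S'.card := card_T (by omega) hS'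
      have hβT : IsPermWord (Finset.Icc (2:ℤ) n \ S).card β := by rw [hTc]; exact hβ
      have hβT' : IsPermWord (Finset.Icc (2:ℤ) n \ S').card β' := by rw [hTc']; exact hβ'
      obtain ⟨e1, e2⟩ := split_eq heq (one_not_mem_embL hS hα) (one_not_mem_embL hS' hα')
      have hSS' : S = S' := by
        ext x
        rw [← mem_embL hα, ← mem_embL hα', e1]
      subst hSS'
      have hαα' : α = α' := by
        rw [← reduce_embL hα, ← reduce_embL hα', e1]
      have hββ' : β = β' := by
        rw [← reduce_embL hβT, ← reduce_embL hβT', e2]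
      rw [hαα', hββ']
    · -- surjective
      intro l hl
      obtain ⟨hp, hA⟩ := mem_AF.mp hl
      have h1l : (1:ℤ) ∈ l := (isPermWord_iff.mp hp).2 1 |>.mpr ⟨le_refl _, by omega⟩
      obtain ⟨τ, τ', hlsplit⟩ := List.append_of_mem h1l
      subst hlsplit
      obtain ⟨h1τ, h1τ', hxτ, hxτ', hdisj⟩ := split_facts hp
      obtain ⟨hnd, hmem⟩ := isPermWord_iff.mp hp
      obtain ⟨ndτ, nd2, _⟩ := List.nodup_append.mp hnd
      have ndτ' : τ'.Nodup := (List.nodup_cons.mp nd2).2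
      obtain ⟨hA1, hA2, hnτ'⟩ := (andreI_split_iff hn hp).mp hA
      have hlen : τ.length + 1 + τ'.length = n := by
        have := isPermWord_length hp
        simp only [List.length_append, List.length_cons] at this
        omega
      have hScard : τ.toFinset.card = τ.length := List.toFinset_card_of_nodup ndτ
      have hS : τ.toFinset ⊆ Finset.Icc (2:ℤ) n := by
        intro x hx
        rw [List.mem_toFinset] at hx
        rw [Finset.mem_Icc]
        exact hxτ x hx
      have hT : Finset.Icc (2:ℤ) n \ τ.toFinset = τ'.toFinset := by
        ext x
        rw [Finset.mem_sdiff, Finset.mem_Icc, List.mem_toFinset, List.mem_toFinset]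
        constructor
        · rintro ⟨⟨hx2, hxn⟩, hxτ0⟩
          have hxl : x ∈ τ ++ 1 :: τ' := (hmem x).mpr ⟨by omega, hxn⟩
          rcases List.mem_append.mp hxl with h' | h'
          · exact absurd h' hxτ0
          · rcases List.mem_cons.mp h' with h'' | h''
            · omega
            · exact h''
        · intro hx
          exact ⟨hxτ' x hx, fun hc => hdisj hc hx⟩
      refine ⟨⟨τ.toFinset, reduce τ, reduce τ'⟩, ?_, ?_⟩
      · rw [Finset.mem_sigma, Finset.mem_product]
        refine ⟨?_, ?_, ?_⟩
        · rw [IA, Finset.mem_filter, Finset.mem_powerset]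
          refine ⟨hS, fun hc => ?_⟩
          rw [List.mem_toFinset] at hc
          exact hdisj hc hnτ'
        · rw [mem_AF, hScard]
          exact ⟨reduce_permWord ndτ, andreI_map hA1 _ (fun x hx y hy hxy => rk_lt hy hxy)⟩
        · rw [mem_AF]
          have hτ'len : τ'.length = n - 1 - τ.toFinset.card := by rw [hScard]; omega
          rw [← hτ'len]
          exact ⟨reduce_permWord ndτ', andreI_map hA2 _ (fun x hx y hy hxy => rk_lt hy hxy)⟩
      · rw [hT, embL_reduce ndτ, embL_reduce ndτ']
  rw [← key, Finset.card_sigma]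
  exact Finset.sum_congr rfl (fun S _ => Finset.card_product _ _)


lemma cardBF (n : ℕ) (hn : 2 ≤ n) :
    (BF n).card = ∑ S ∈ IB n, (BF S.card).card * (BF (n - 1 - S.card)).card := by
  have key : ((IB n).sigma (fun S => BF S.card ×ˢ BF (n - 1 - S.card))).card = (BF n).card := by
    apply Finset.card_bij
      (fun p _ => embL p.1 p.2.1 ++ 1 :: embL (Finset.Icc (2:ℤ) n \ p.1) p.2.2)
    · -- maps into BF n
      rintro ⟨S, α, β⟩ hp
      simp only [Finset.mem_sigma, Finset.mem_product, IB, Finset.mem_filter,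
        Finset.mem_powerset] at hp
      obtain ⟨⟨hS, hnS⟩, hαm, hβm⟩ := hp
      obtain ⟨hα, hαA⟩ := mem_BF.mp hαm
      obtain ⟨hβ, hβA⟩ := mem_BF.mp hβm
      have hTcard : (Finset.Icc (2:ℤ) n \ S).card = n - 1 - S.card := card_T (by omega) hS
      have hβ' : IsPermWord (Finset.Icc (2:ℤ) n \ S).card β := by rw [hTcard]; exact hβ
      have hperm := construct_isPermWord (by omega) hS hα hβ'
      rw [mem_BF]
      refine ⟨hperm, (andreII_split_iff hn hperm).mpr ⟨?_, ?_, ?_⟩⟩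
      · exact andreII_map hαA _ (fun x hx y hy hxy => embL_fun_lt
          ((isPermWord_iff.mp hα).2 x |>.mp hx).1 hxy ((isPermWord_iff.mp hα).2 y |>.mp hy).2)
      · exact andreII_map hβA _ (fun x hx y hy hxy => embL_fun_lt
          ((isPermWord_iff.mp hβ').2 x |>.mp hx).1 hxy ((isPermWord_iff.mp hβ').2 y |>.mp hy).2)
      · refine (mem_embL hβ').mpr ?_
        rw [Finset.mem_sdiff, Finset.mem_Icc]
        exact ⟨⟨le_refl _, by omega⟩, hnS⟩
    · -- injective
      rintro ⟨S, α, β⟩ hp ⟨S', α', β'⟩ hp' heq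
      simp only [Finset.mem_sigma, Finset.mem_product, IB, Finset.mem_filter,
        Finset.mem_powerset] at hp hp'
      dsimp only at heq
      obtain ⟨⟨hS, _⟩, hαm, hβm⟩ := hp
      obtain ⟨⟨hS', _⟩, hαm', hβm'⟩ := hp'
      obtain ⟨hα, _⟩ := mem_BF.mp hαm
      obtain ⟨hβ, _⟩ := mem_BF.mp hβm
      obtain ⟨hα', _⟩ := mem_BF.mp hαm'
      obtain ⟨hβ', _⟩ := mem_BF.mp hβm'
      have hTc : (Finset.Icc (2:ℤ) n \ S).card = n - 1 - S.card := card_T (by omega) hS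
      have hTc' : (Finset.Icc (2:ℤ) n \ S').card = n - 1 - S'.card := card_T (by omega) hS'
      have hβT : IsPermWord (Finset.Icc (2:ℤ) n \ S).card β := by rw [hTc]; exact hβ
      have hβT' : IsPermWord (Finset.Icc (2:ℤ) n \ S').card β' := by rw [hTc']; exact hβ'
      obtain ⟨e1, e2⟩ := split_eq heq (one_not_mem_embL hS hα) (one_not_mem_embL hS' hα')
      have hSS' : S = S' := by
        ext x
        rw [← mem_embL hα, ← mem_embL hα', e1]
      subst hSS'
      have hαα' : α = α' := by
        rw [← reduce_embL hα, ← reduce_embL hα', e1]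
      have hββ' : β = β' := by
        rw [← reduce_embL hβT, ← reduce_embL hβT', e2]
      rw [hαα', hββ']
    · -- surjective
      intro l hl
      obtain ⟨hp, hA⟩ := mem_BF.mp hl
      have h1l : (1:ℤ) ∈ l := (isPermWord_iff.mp hp).2 1 |>.mpr ⟨le_refl _, by omega⟩
      obtain ⟨τ, τ', hlsplit⟩ := List.append_of_mem h1l
      subst hlsplit
      obtain ⟨h1τ, h1τ', hxτ, hxτ', hdisj⟩ := split_facts hp
      obtain ⟨hnd, hmem⟩ := isPermWord_iff.mp hp
      obtain ⟨ndτ, nd2, _⟩ := List.nodup_append.mp hnd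
      have ndτ' : τ'.Nodup := (List.nodup_cons.mp nd2).2
      obtain ⟨hA1, hA2, h2τ'⟩ := (andreII_split_iff hn hp).mp hA
      have hlen : τ.length + 1 + τ'.length = n := by
        have := isPermWord_length hp
        simp only [List.length_append, List.length_cons] at this
        omega
      have hScard : τ.toFinset.card = τ.length := List.toFinset_card_of_nodup ndτ
      have hS : τ.toFinset ⊆ Finset.Icc (2:ℤ) n := by
        intro x hx
        rw [List.mem_toFinset] at hx
        rw [Finset.mem_Icc]
        exact hxτ x hx
      have hT : Finset.Icc (2:ℤ) n \ τ.toFinset = τ'.toFinset := by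
        ext x
        rw [Finset.mem_sdiff, Finset.mem_Icc, List.mem_toFinset, List.mem_toFinset]
        constructor
        · rintro ⟨⟨hx2, hxn⟩, hxτ0⟩
          have hxl : x ∈ τ ++ 1 :: τ' := (hmem x).mpr ⟨by omega, hxn⟩
          rcases List.mem_append.mp hxl with h' | h'
          · exact absurd h' hxτ0
          · rcases List.mem_cons.mp h' with h'' | h''
            · omega
            · exact h''
        · intro hx
          exact ⟨hxτ' x hx, fun hc => hdisj hc hx⟩
      refine ⟨⟨τ.toFinset, reduce τ, reduce τ'⟩, ?_, ?_⟩
      · rw [Finset.mem_sigma, Finset.mem_product]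
        refine ⟨?_, ?_, ?_⟩
        · rw [IB, Finset.mem_filter, Finset.mem_powerset]
          refine ⟨hS, fun hc => ?_⟩
          rw [List.mem_toFinset] at hc
          exact hdisj hc h2τ'
        · rw [mem_BF, hScard]
          exact ⟨reduce_permWord ndτ, andreII_map hA1 _ (fun x hx y hy hxy => rk_lt hy hxy)⟩
        · rw [mem_BF]
          have hτ'len : τ'.length = n - 1 - τ.toFinset.card := by rw [hScard]; omega
          rw [← hτ'len]
          exact ⟨reduce_permWord ndτ', andreII_map hA2 _ (fun x hx y hy hxy => rk_lt hy hxy)⟩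
      · rw [hT, embL_reduce ndτ, embL_reduce ndτ']
  rw [← key, Finset.card_sigma]
  exact Finset.sum_congr rfl (fun S _ => Finset.card_product _ _)


end Count

section Main

lemma oneTo_zero : oneTo 0 = [] := rfl

lemma AF_zero : AF 0 = {([] : List ℤ)} := by
  ext l
  rw [mem_AF, Finset.mem_singleton]
  constructor
  · rintro ⟨hp, _⟩
    have := isPermWord_length hp
    exact List.length_eq_zero_iff.mp this
  · rintro rfl
    exact ⟨isPermWord_iff.mpr ⟨List.nodup_nil, fun x => by simp; omega⟩, AndreI.nil⟩

lemma BF_zero : BF 0 = {([] : List ℤ)} := by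
  ext l
  rw [mem_BF, Finset.mem_singleton]
  constructor
  · rintro ⟨hp, _⟩
    have := isPermWord_length hp
    exact List.length_eq_zero_iff.mp this
  · rintro rfl
    exact ⟨isPermWord_iff.mpr ⟨List.nodup_nil, fun x => by simp; omega⟩, AndreII.nil⟩

lemma isPermWord_one : IsPermWord 1 [(1:ℤ)] :=
  isPermWord_iff.mpr ⟨by simp, fun x => by simp; omega⟩

lemma eq_single_of_permWord_one {l : List ℤ} (hp : IsPermWord 1 l) : l = [(1:ℤ)] := by
  have hlen := isPermWord_length hp
  obtain ⟨a, rfl⟩ := List.length_eq_one_iff.mp hlen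
  have : a ∈ [a] := List.mem_singleton_self a
  have := ((isPermWord_iff.mp hp).2 a).mp this
  have : a = 1 := by omega
  rw [this]

lemma andreI_single : AndreI [(1:ℤ)] := by
  have := AndreI.node [] [] 1 AndreI.nil AndreI.nil (by simp) (by simp) (Or.inl rfl)
  simpa using this

lemma andreII_single : AndreII [(1:ℤ)] := by
  have := AndreII.node [] [] 1 AndreII.nil AndreII.nil (by simp) (by simp) (Or.inl rfl)
  simpa using this

lemma AF_one : AF 1 = {[(1:ℤ)]} := by
  ext l
  rw [mem_AF, Finset.mem_singleton]
  constructor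
  · rintro ⟨hp, _⟩
    exact eq_single_of_permWord_one hp
  · rintro rfl
    exact ⟨isPermWord_one, andreI_single⟩

lemma BF_one : BF 1 = {[(1:ℤ)]} := by
  ext l
  rw [mem_BF, Finset.mem_singleton]
  constructor
  · rintro ⟨hp, _⟩
    exact eq_single_of_permWord_one hp
  · rintro rfl
    exact ⟨isPermWord_one, andreII_single⟩

lemma AF_card_eq_BF_card : ∀ n : ℕ, (AF n).card = (BF n).card := by
  intro n
  induction n using Nat.strong_induction_on with
  | _ n ih =>
    rcases n with _ | (_ | n)
    · rw [AF_zero, BF_zero]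
    · rw [AF_one, BF_one]
    · have hm : 2 ≤ n + 2 := by omega
      rw [cardAF _ hm, cardBF _ hm]
      have hcard_bound : ∀ S ∈ IA (n + 2), S.card ≤ n + 1 := by
        intro S hS
        rw [IA, Finset.mem_filter, Finset.mem_powerset] at hS
        have := Finset.card_le_card hS.1
        rwa [card_Icc2n _ (by omega)] at this
      have h1 : ∑ S ∈ IA (n + 2), (AF S.card).card * (AF (n + 2 - 1 - S.card)).card
          = ∑ S ∈ IA (n + 2), (BF S.card).card * (BF (n + 2 - 1 - S.card)).card := by
        refine Finset.sum_congr rfl (fun S hS => ?_)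
        rw [ih S.card (by have := hcard_bound S hS; omega),
          ih (n + 2 - 1 - S.card) (by omega)]
      rw [h1]
      -- reindex via x ↦ n + 4 - x
      have hinj : Function.Injective (fun x : ℤ => ((n:ℤ) + 4) - x) :=
        fun x y h => by simpa using h
      have himg_card : ∀ S : Finset ℤ, (S.image (fun x : ℤ => ((n:ℤ) + 4) - x)).card = S.card :=
        fun S => Finset.card_image_of_injective S hinj
      have hinv : ∀ S : Finset ℤ, (S.image (fun x : ℤ => ((n:ℤ) + 4) - x)).image
          (fun x : ℤ => ((n:ℤ) + 4) - x) = S := by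
        intro S
        rw [Finset.image_image]
        have : ((fun x : ℤ => ((n:ℤ) + 4) - x) ∘ (fun x : ℤ => ((n:ℤ) + 4) - x)) = id := by
          funext x; simp
        rw [this, Finset.image_id]
      refine Finset.sum_nbij' (fun S => S.image (fun x : ℤ => ((n:ℤ) + 4) - x))
        (fun S => S.image (fun x : ℤ => ((n:ℤ) + 4) - x)) ?_ ?_ ?_ ?_ ?_
      · intro S hS
        rw [IA, Finset.mem_filter, Finset.mem_powerset] at hS
        rw [IB, Finset.mem_filter, Finset.mem_powerset]
        constructor
        · intro y hy
          rw [Finset.mem_image] at hy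
          obtain ⟨x, hx, rfl⟩ := hy
          have := hS.1 hx
          rw [Finset.mem_Icc] at this ⊢
          push_cast at this ⊢
          omega
        · intro hc
          rw [Finset.mem_image] at hc
          obtain ⟨x, hx, hx2⟩ := hc
          have hxn : x = ((n:ℤ) + 2) := by omega
          apply hS.2
          rw [show ((n + 2 : ℕ) : ℤ) = (n:ℤ) + 2 by push_cast; ring, ← hxn]
          exact hx
      · intro S hS
        rw [IB, Finset.mem_filter, Finset.mem_powerset] at hS
        rw [IA, Finset.mem_filter, Finset.mem_powerset]
        constructor
        · intro y hy
          rw [Finset.mem_image] at hy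
          obtain ⟨x, hx, rfl⟩ := hy
          have := hS.1 hx
          rw [Finset.mem_Icc] at this ⊢
          push_cast at this ⊢
          omega
        · intro hc
          rw [Finset.mem_image] at hc
          obtain ⟨x, hx, hx2⟩ := hc
          have hxn : x = (2:ℤ) := by push_cast at hx2; omega
          exact hS.2 (hxn ▸ hx)
      · intro S _; exact hinv S
      · intro S _; exact hinv S
      · intro S _
        rw [himg_card]
end Main


/-- For every `n ≥ 1`, the number of André I permutations of `[n]` equals the
number of André II permutations of `[n]`. -/
theorem andreI_card_eq_andreII_card (n : ℕ) (hn : 1 ≤ n) :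
    Nat.card {l : List ℤ // IsPermWord n l ∧ AndreI l} =
      Nat.card {l : List ℤ // IsPermWord n l ∧ AndreII l} := by
  have e1 : {l : List ℤ // IsPermWord n l ∧ AndreI l} ≃ {l : List ℤ // l ∈ AF n} :=
    Equiv.subtypeEquivRight (fun l => mem_AF.symm)
  have e2 : {l : List ℤ // IsPermWord n l ∧ AndreII l} ≃ {l : List ℤ // l ∈ BF n} :=
    Equiv.subtypeEquivRight (fun l => mem_BF.symm)
  rw [Nat.card_congr e1, Nat.card_congr e2, Nat.card_eq_finsetCard,
    Nat.card_eq_finsetCard, AF_card_eq_BF_card]
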